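/- arXiv:1304.7333 — 4 statements merged into one kernel-verified Lean document; each statement's English description precedes it below -/
import Mathlib

section
/- If p is a prime such that 2^p - 1 has exactly one prime divisor, then 2^p - 1 is itself prime (i.e., a Mersenne prime). -/
theorem stmt_2 (p : ℕ) (hp : p.Prime) (h : ∃ r : ℕ, (2 ^ p - 1).primeFactors = {r}) :
    (2 ^ p - 1).Prime := by
  obtain ⟨r, hr⟩ := h
  set n := 2 ^ p - 1 with hn
  have hp2 : 2 ≤ p := hp.two_le
  have h2p : 4 ∣ 2 ^ p := by
    calc (4 : ℕ) = 2 ^ 2 := by norm_num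
    _ ∣ 2 ^ p := pow_dvd_pow 2 hp2
  have hple : 2 ^ 2 ≤ 2 ^ p := Nat.pow_le_pow_right (by norm_num) hp2
  have hn3 : 3 ≤ n := by omega
  have hn4 : n % 4 = 3 := by omega
  have hnpos : n ≠ 0 := by omega
  have hrmem : r ∈ n.primeFactors := by rw [hr]; exact Finset.mem_singleton_self r
  have hrp : r.Prime := Nat.prime_of_mem_primeFactors hrmem
  have hrdvd : r ∣ n := Nat.dvd_of_mem_primeFactors hrmem
  have huniq : ∀ {d : ℕ}, d.Prime → d ∣ n → d = r := by
    intro d hd hdn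
    have : d ∈ n.primeFactors := Nat.mem_primeFactors.mpr ⟨hd, hdn, hnpos⟩
    rw [hr] at this; exact Finset.mem_singleton.mp this
  have hpow := Nat.eq_prime_pow_of_unique_prime_dvd hnpos huniq
  set k := n.primeFactorsList.length with hk
  -- r is odd
  have hnodd : n % 2 = 1 := by omega
  have hrodd : r % 2 = 1 := by
    by_contra hc
    have h2r : 2 ∣ r := by omega
    have : 2 ∣ n := h2r.trans hrdvd
    omega
  -- k is odd
  have hkodd : Odd k := by
    rcases Nat.even_or_odd k with hke | hko
    · exfalso
      obtain ⟨j, hj⟩ := hke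
      have hr2 : r ^ 2 % 4 = 1 := by
        obtain ⟨t, ht⟩ : ∃ t, r = 2 * t + 1 := ⟨r / 2, by omega⟩
        subst ht; ring_nf; omega
      have : n % 4 = 1 := by
        rw [hpow, hj, ← two_mul, pow_mul, Nat.pow_mod, hr2]
        simp
      omega
    · exact hko
  -- geometric sum in ℤ
  set S : ℤ := ∑ i ∈ Finset.range k, (-(r : ℤ)) ^ i with hS
  have hgs : S * (-(r : ℤ) - 1) = (-(r : ℤ)) ^ k - 1 := geom_sum_mul _ k
  have hnegpow : (-(r : ℤ)) ^ k = -((r : ℤ) ^ k) := Odd.neg_pow hkodd _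
  have hSmul : S * ((r : ℤ) + 1) = (r : ℤ) ^ k + 1 := by
    rw [hnegpow] at hgs; linarith
  have hnk : (n : ℤ) = (r : ℤ) ^ k := by exact_mod_cast congrArg (Nat.cast : ℕ → ℤ) hpow
  have h2pn : (n : ℤ) + 1 = 2 ^ p := by
    have : (n : ℕ) + 1 = 2 ^ p := by omega
    exact_mod_cast congrArg (Nat.cast : ℕ → ℤ) this
  have hSmul2 : S * ((r : ℤ) + 1) = 2 ^ p := by rw [hSmul, ← hnk, h2pn]
  -- S is odd
  have hSodd : Odd S := by
    have hterm : ∀ i ∈ Finset.range k, (-(r : ℤ)) ^ i % 2 = 1 := by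
      intro i _
      have hro : Odd (-(r : ℤ)) := by
        rw [Int.odd_iff]
        omega
      exact Int.odd_iff.mp (hro.pow)
    obtain ⟨j, hj⟩ := hkodd
    rw [Int.odd_iff, hS, Finset.sum_int_mod, Finset.sum_congr rfl hterm]
    simp [hj]
  -- S divides 2^p, S odd, so S = ±1; positivity gives S = 1
  have hSdvd : S ∣ (2 : ℤ) ^ p := ⟨(r : ℤ) + 1, hSmul2.symm⟩
  have hmdvd : S.natAbs ∣ 2 ^ p := by
    have h := Int.natAbs_dvd_natAbs.mpr hSdvd
    rwa [show ((2:ℤ)^p).natAbs = 2 ^ p by rw [Int.natAbs_pow]; rfl] at h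
  have hmodd : Odd S.natAbs := Int.natAbs_odd.mpr hSodd
  have hmcop : Nat.Coprime S.natAbs (2 ^ p) :=
    Nat.Coprime.pow_right p (hmodd.coprime_two_right)
  have hm1 : S.natAbs = 1 := Nat.Coprime.eq_one_of_dvd hmcop hmdvd
  have hSpos : 0 < S := by
    by_contra hc
    push_neg at hc
    have h1 : (0:ℤ) < (r : ℤ) + 1 := by positivity
    have h2 : (0:ℤ) < 2 ^ p := by positivity
    nlinarith
  have hS1 : S = 1 := by
    rcases Int.natAbs_eq S with h | h <;> omega
  have hrn : (r : ℤ) = (n : ℤ) := by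
    rw [hS1, one_mul] at hSmul2
    linarith
  have : r = n := by exact_mod_cast hrn
  rwa [← this]
end

section
/- Every simple graph Γ = (V, E) on a finite vertex set satisfies α(Γ) ≥ Σ_{v ∈ V} 1/(1 + d(v)), where α(Γ) is the independence number of Γ and d(v) is the degree of the vertex v. -/
/-!
Greedy argument: pick a vertex `v` of minimum degree, put it into the independent set and delete
its closed neighbourhood. Each of the `d(v) + 1` deleted vertices has degree at least `d(v)`, so
together they carry weight at most `1` in the sum `∑ 1 / (1 + d(u))`, while the degrees of the
surviving vertices can only drop, which only increases their weights. Induction on the remaining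
vertex set finishes the proof.
-/

open Finset

namespace SimpleGraph

variable {V : Type*} (G : SimpleGraph V) [DecidableRel G.Adj]

def degreeWithin (T : Finset V) (v : V) : ℕ := #{w ∈ T | G.Adj v w}

def closedNeighborFinsetWithin [DecidableEq V] (T : Finset V) (v : V) : Finset V :=
  insert v {w ∈ T | G.Adj v w}

def caroWeiSum (T : Finset V) : ℚ := ∑ v ∈ T, 1 / (1 + (G.degreeWithin T v : ℚ))

variable {G}

theorem degreeWithin_mono {T' T : Finset V} (h : T' ⊆ T) (v : V) :
    G.degreeWithin T' v ≤ G.degreeWithin T v :=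
  card_le_card (filter_subset_filter _ h)

theorem sum_le_caroWeiSum_of_subset {T' T : Finset V} (h : T' ⊆ T) :
    ∑ u ∈ T', 1 / (1 + (G.degreeWithin T u : ℚ)) ≤ G.caroWeiSum T' := by
  refine sum_le_sum fun u _ => one_div_le_one_div_of_le (by positivity) ?_
  exact_mod_cast Nat.add_le_add_left (degreeWithin_mono h u) 1

section

variable [DecidableEq V]

theorem card_closedNeighborFinsetWithin (T : Finset V) (v : V) :
    #(G.closedNeighborFinsetWithin T v) = G.degreeWithin T v + 1 :=
  card_insert_of_notMem (by simp)

theorem closedNeighborFinsetWithin_subset {T : Finset V} {v : V} (hv : v ∈ T) :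
    G.closedNeighborFinsetWithin T v ⊆ T :=
  insert_subset hv (filter_subset _ _)

theorem sum_closedNeighborFinsetWithin_le_one {T : Finset V} {v : V}
    (hmin : ∀ u ∈ T, G.degreeWithin T v ≤ G.degreeWithin T u) :
    ∑ u ∈ G.closedNeighborFinsetWithin T v, 1 / (1 + (G.degreeWithin T u : ℚ)) ≤ 1 := by
  have hterm : ∀ u ∈ G.closedNeighborFinsetWithin T v,
      1 / (1 + (G.degreeWithin T u : ℚ)) ≤ 1 / (1 + G.degreeWithin T v) := by
    intro u hu
    rcases mem_insert.mp hu with rfl | hu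
    · exact le_rfl
    · exact one_div_le_one_div_of_le (by positivity)
        (by exact_mod_cast Nat.add_le_add_left (hmin u (mem_filter.mp hu).1) 1)
  calc ∑ u ∈ G.closedNeighborFinsetWithin T v, 1 / (1 + (G.degreeWithin T u : ℚ))
      ≤ #(G.closedNeighborFinsetWithin T v) • (1 / (1 + (G.degreeWithin T v : ℚ))) :=
        sum_le_card_nsmul _ _ _ hterm
    _ = 1 := by
        rw [card_closedNeighborFinsetWithin, nsmul_eq_mul]
        push_cast
        field_simp
        ring

theorem caroWeiSum_le_caroWeiSum_sdiff_add_one {T : Finset V} {v : V} (hv : v ∈ T)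
    (hmin : ∀ u ∈ T, G.degreeWithin T v ≤ G.degreeWithin T u) :
    G.caroWeiSum T ≤ G.caroWeiSum (T \ G.closedNeighborFinsetWithin T v) + 1 := by
  calc G.caroWeiSum T
      = ∑ u ∈ T \ G.closedNeighborFinsetWithin T v, 1 / (1 + (G.degreeWithin T u : ℚ)) +
          ∑ u ∈ G.closedNeighborFinsetWithin T v, 1 / (1 + (G.degreeWithin T u : ℚ)) :=
        (sum_sdiff (closedNeighborFinsetWithin_subset hv)).symm
    _ ≤ G.caroWeiSum (T \ G.closedNeighborFinsetWithin T v) + 1 :=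
        add_le_add (sum_le_caroWeiSum_of_subset sdiff_subset)
          (sum_closedNeighborFinsetWithin_le_one hmin)

theorem isIndepSet_insert_of_subset_sdiff {T s : Finset V} {v : V}
    (hs : G.IsIndepSet (s : Set V)) (hsT : s ⊆ T \ G.closedNeighborFinsetWithin T v) :
    G.IsIndepSet (insert v s : Finset V) := by
  have hnadj : ∀ b ∈ s, ¬G.Adj v b := fun b hb hvb =>
    have ⟨hbT, hbN⟩ := mem_sdiff.mp (hsT hb)
    hbN (mem_insert_of_mem (mem_filter.mpr ⟨hbT, hvb⟩))
  rw [coe_insert, IsIndepSet, Set.pairwise_insert]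
  exact ⟨hs, fun b hb _ => ⟨hnadj b hb, fun hbv => hnadj b hb hbv.symm⟩⟩

theorem exists_isIndepSet_subset_caroWeiSum_le (T : Finset V) :
    ∃ s ⊆ T, G.IsIndepSet (s : Set V) ∧ G.caroWeiSum T ≤ #s := by
  induction T using strongInduction with
  | _ T ih =>
  rcases T.eq_empty_or_nonempty with rfl | hT
  · exact ⟨∅, subset_rfl, by simp, by simp [caroWeiSum]⟩
  obtain ⟨v, hv, hmin⟩ := T.exists_min_image (G.degreeWithin T) hT
  have hvN : v ∈ G.closedNeighborFinsetWithin T v := mem_insert_self _ _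
  obtain ⟨s, hsT, hs, hcard⟩ :=
    ih _ (sdiff_ssubset (closedNeighborFinsetWithin_subset hv) ⟨v, hvN⟩)
  have hvs : v ∉ s := fun h => (mem_sdiff.mp (hsT h)).2 hvN
  refine ⟨insert v s, insert_subset hv (hsT.trans sdiff_subset),
    isIndepSet_insert_of_subset_sdiff hs hsT, ?_⟩
  rw [card_insert_of_notMem hvs, Nat.cast_succ]
  linarith [caroWeiSum_le_caroWeiSum_sdiff_add_one hv hmin]

end

end SimpleGraph

/-- Caro–Wei bound: every finite simple graph has an independent set of size at least
`∑_v 1/(1 + deg v)`. -/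
theorem stmt_3 {V : Type*} [Fintype V] (G : SimpleGraph V) [DecidableRel G.Adj] :
    ∃ s : Finset V, (∀ a ∈ s, ∀ b ∈ s, ¬ G.Adj a b) ∧
      (∑ v : V, (1 : ℚ) / (1 + G.degree v)) ≤ s.card := by
  classical
  obtain ⟨s, -, hs, hcard⟩ := G.exists_isIndepSet_subset_caroWeiSum_le univ
  refine ⟨s, fun a ha b hb hab => hs ha hb (G.ne_of_adj hab) hab, ?_⟩
  simpa [SimpleGraph.caroWeiSum, SimpleGraph.degreeWithin, SimpleGraph.neighborFinset_eq_filter,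
    ← SimpleGraph.card_neighborFinset_eq_degree] using hcard
end

section
/- Let G be a finite group, K a normal solvable subgroup of G, and p, q primes dividing |G| such that p ≢ 1 (mod q), q ≢ 1 (mod p), and every subgroup of G of order pq is cyclic (equivalently, the product of a Sylow p- and Sylow q-subgroup inside any {p,q}-subgroup has order pq). If p divides |K|, then G contains an element of order pq. -/
/-!
Let `N` be a normal subgroup in which `p` divides the order exactly once, and suppose `q` divides
`|G|` but not `|N|`. By the Frattini argument `G = N_G(P) N` for a Sylow `p`-subgroup `P` of `N`,
so `q` divides `|N_G(P)|`. An element `g` of order `q` normalizing `P` acts on `P` through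
`Aut(P)`, of order `p - 1`; since `q ∤ p - 1`, `g` centralizes `P`, and `g` times a generator of
`P` has order `pq`.

This settles the case `q ∤ |K|`. Otherwise `p` and `q` divide the order of the solvable group
`K` exactly once; look at the derived subgroup `K'`. If `|K'|` is divisible by exactly one of
`p`, `q`, the Frattini step applies; if by neither, the abelianization contains an element of
order `pq`, which lifts; if by both, induct on `K' < K`.
-/

open Subgroup

theorem Nat.factorization_eq_one_iff {n p : ℕ} (hp : p.Prime) (hn : n ≠ 0) :
    n.factorization p = 1 ↔ p ∣ n ∧ ¬ p ^ 2 ∣ n := by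
  rw [hp.dvd_iff_one_le_factorization hn, hp.pow_dvd_iff_le_factorization hn]
  omega

section

variable {G : Type*} [Group G] {p q : ℕ}

theorem Subgroup.prime_dvd_index_of_not_dvd_card (N : Subgroup G) (hp : p.Prime)
    (hpG : p ∣ Nat.card G) (hpN : ¬ p ∣ Nat.card N) : p ∣ N.index := by
  rw [← N.card_mul_index] at hpG
  exact ((hp.dvd_mul).mp hpG).resolve_left hpN

variable [Finite G]

theorem exists_orderOf_eq_of_surjective {H : Type*} [Group H] {f : G →* H}
    (hf : Function.Surjective f) (y : H) : ∃ x : G, orderOf x = orderOf y := by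
  obtain ⟨z, rfl⟩ := hf y
  exact ⟨z ^ (orderOf z / orderOf (f z)),
    orderOf_pow_orderOf_div (orderOf_pos z).ne' (orderOf_map_dvd f z)⟩

theorem CommGroup.exists_orderOf_eq_mul {A : Type*} [CommGroup A] [Finite A]
    (hp : p.Prime) (hq : q.Prime) (hpq : p ≠ q) (hpA : p ∣ Nat.card A)
    (hqA : q ∣ Nat.card A) :
    ∃ x : A, orderOf x = p * q := by
  have := Fact.mk hp
  have := Fact.mk hq
  obtain ⟨x, hx⟩ := exists_prime_orderOf_dvd_card' p hpA
  obtain ⟨y, hy⟩ := exists_prime_orderOf_dvd_card' q hqA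
  refine ⟨x * y, ?_⟩
  rw [(Commute.all x y).orderOf_mul_eq_mul_orderOf_of_coprime
    (by rw [hx, hy]; exact (Nat.coprime_primes hp hq).mpr hpq), hx, hy]

theorem mem_centralizer_of_mem_normalizer_of_orderOf_eq {P : Subgroup G} (hp : p.Prime)
    (hq : q.Prime) (hP : Nat.card P = p) (h1 : ¬ q ∣ p - 1) {g : G}
    (hg : g ∈ normalizer (P : Set G)) (hgq : orderOf g = q) : g ∈ centralizer (P : Set G) := by
  have := Fact.mk hp
  have := isCyclic_of_prime_card hP
  set φ := P.normalizerMonoidHom ⟨g, hg⟩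
  have hφq : orderOf φ ∣ q := hgq ▸ orderOf_mk g hg ▸ orderOf_map_dvd _ _
  have hφp : orderOf φ ∣ p - 1 := by
    rw [← Nat.totient_prime hp, ← hP, ← IsCyclic.card_mulAut]
    exact orderOf_dvd_natCard φ
  have hφ : φ = 1 := orderOf_eq_one_iff.mp
    (Nat.eq_one_of_dvd_coprimes ((hq.coprime_iff_not_dvd).mpr h1) hφq hφp)
  have hker : (⟨g, hg⟩ : normalizer (P : Set G)) ∈ P.normalizerMonoidHom.ker := hφ
  rwa [normalizerMonoidHom_ker, mem_subgroupOf] at hker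

theorem exists_orderOf_eq_mul_of_mem_normalizer {P : Subgroup G} (hp : p.Prime) (hq : q.Prime)
    (hpq : p ≠ q) (hP : Nat.card P = p) (h1 : ¬ q ∣ p - 1) {g : G}
    (hg : g ∈ normalizer (P : Set G)) (hgq : orderOf g = q) : ∃ x : G, orderOf x = p * q := by
  have := Fact.mk hp
  obtain ⟨x, hx⟩ := exists_prime_orderOf_dvd_card' (G := P) p hP.symm.dvd
  have hcomm : Commute (x : G) g :=
    (mem_centralizer_iff.mp (mem_centralizer_of_mem_normalizer_of_orderOf_eq hp hq hP h1 hg hgq)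
      x x.2)
  rw [← orderOf_coe] at hx
  refine ⟨x * g, ?_⟩
  rw [hcomm.orderOf_mul_eq_mul_orderOf_of_coprime
    (by rw [hx, hgq]; exact (Nat.coprime_primes hp hq).mpr hpq), hx, hgq]

theorem exists_orderOf_eq_mul_of_normal (N : Subgroup G) [N.Normal] (hp : p.Prime)
    (hq : q.Prime) (hpq : p ≠ q) (h1 : ¬ q ∣ p - 1) (hpN : p ∣ Nat.card N)
    (hp2N : ¬ p ^ 2 ∣ Nat.card N) (hqG : q ∣ Nat.card G) (hqN : ¬ q ∣ Nat.card N) :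
    ∃ x : G, orderOf x = p * q := by
  have := Fact.mk hp
  have := Fact.mk hq
  obtain ⟨P⟩ : Nonempty (Sylow p N) := inferInstance
  have hP : Nat.card (P.map N.subtype) = p := by
    rw [card_map_of_injective N.subtype_injective, P.card_eq_multiplicity,
      (Nat.factorization_eq_one_iff hp Nat.card_pos.ne').mpr ⟨hpN, hp2N⟩, pow_one]
  have hqH : q ∣ Nat.card (normalizer (P.map N.subtype : Set G)) := by
    refine dvd_trans ?_ (relIndex_dvd_card N _)
    rw [← relIndex_sup_right, Sylow.normalizer_sup_eq_top P, relIndex_top_right]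
    exact N.prime_dvd_index_of_not_dvd_card hq hqG hqN
  obtain ⟨g, hg⟩ := exists_prime_orderOf_dvd_card' q hqH
  rw [← orderOf_coe] at hg
  exact exists_orderOf_eq_mul_of_mem_normalizer hp hq hpq hP h1 g.2 hg

theorem exists_orderOf_eq_mul_of_isSolvable [Group.IsSolvable G] (hp : p.Prime) (hq : q.Prime)
    (hpq : p ≠ q) (h1 : ¬ q ∣ p - 1) (h2 : ¬ p ∣ q - 1) (hpG : p ∣ Nat.card G)
    (hp2G : ¬ p ^ 2 ∣ Nat.card G) (hqG : q ∣ Nat.card G) (hq2G : ¬ q ^ 2 ∣ Nat.card G) :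
    ∃ x : G, orderOf x = p * q := by
  induction hn : Nat.card G using Nat.strong_induction_on generalizing G with
  | _ n ih =>
  set N := commutator G
  have hNG : Nat.card N ∣ Nat.card G := card_subgroup_dvd_card N
  by_cases hpN : p ∣ Nat.card N <;> by_cases hqN : q ∣ Nat.card N
  · have : Nontrivial G := Finite.one_lt_card_iff_nontrivial.mp
      (hp.one_lt.trans_le (Nat.le_of_dvd Nat.card_pos hpG))
    have hlt : Nat.card N < n := hn ▸ (card_le_card_group N).lt_of_ne
      (mt (card_eq_iff_eq_top N).mp (Group.IsSolvable.commutator_lt_top_of_nontrivial G).ne)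
    obtain ⟨x, hx⟩ :=
      ih _ hlt hpN (fun h ↦ hp2G (h.trans hNG)) hqN (fun h ↦ hq2G (h.trans hNG)) rfl
    exact ⟨x, (orderOf_coe x).trans hx⟩
  · exact exists_orderOf_eq_mul_of_normal N hp hq hpq h1 hpN (fun h ↦ hp2G (h.trans hNG)) hqG hqN
  · obtain ⟨x, hx⟩ :=
      exists_orderOf_eq_mul_of_normal N hq hp hpq.symm h2 hqN (fun h ↦ hq2G (h.trans hNG)) hpG hpN
    exact ⟨x, hx.trans (mul_comm q p)⟩
  · obtain ⟨y, hy⟩ := CommGroup.exists_orderOf_eq_mul (A := Abelianization G) hp hq hpq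
      (N.prime_dvd_index_of_not_dvd_card hp hpG hpN) (N.prime_dvd_index_of_not_dvd_card hq hqG hqN)
    obtain ⟨x, hx⟩ := exists_orderOf_eq_of_surjective (f := Abelianization.of)
      QuotientGroup.mk_surjective y
    exact ⟨x, hx.trans hy⟩

end

theorem stmt_4_general {G : Type*} [Group G] [Finite G] (K : Subgroup G) [K.Normal]
    (hK : IsSolvable K) (p q : ℕ) (hp : p.Prime) (hq : q.Prime) (hpq : p ≠ q)
    (h1 : ¬ q ∣ p - 1) (h2 : ¬ p ∣ q - 1)
    (hsylp : (Nat.card G).factorization p = 1)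
    (hsylq : (Nat.card G).factorization q = 1)
    (hpK : p ∣ Nat.card K) :
    ∃ x : G, orderOf x = p * q := by
  have : Group.IsSolvable K := hK
  obtain ⟨-, hp2G⟩ := (Nat.factorization_eq_one_iff hp Nat.card_pos.ne').mp hsylp
  obtain ⟨hqG, hq2G⟩ := (Nat.factorization_eq_one_iff hq Nat.card_pos.ne').mp hsylq
  have hKG : Nat.card K ∣ Nat.card G := card_subgroup_dvd_card K
  have hp2K : ¬ p ^ 2 ∣ Nat.card K := fun h ↦ hp2G (h.trans hKG)
  by_cases hqK : q ∣ Nat.card K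
  · obtain ⟨x, hx⟩ := exists_orderOf_eq_mul_of_isSolvable hp hq hpq h1 h2 hpK hp2K hqK
      (fun h ↦ hq2G (h.trans hKG))
    exact ⟨x, (orderOf_coe x).trans hx⟩
  · exact exists_orderOf_eq_mul_of_normal K hp hq hpq h1 hpK hp2K hqG hqK

theorem stmt_4 {G : Type*} [Group G] [Finite G] (K : Subgroup G) [K.Normal]
    (hK : IsSolvable K) (p q : ℕ) (hp : p.Prime) (hq : q.Prime) (hpq : p ≠ q)
    (hpG : p ∣ Nat.card G) (hqG : q ∣ Nat.card G)
    (h1 : ¬ q ∣ p - 1) (h2 : ¬ p ∣ q - 1)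
    (hsylp : (Nat.card G).factorization p = 1)
    (hsylq : (Nat.card G).factorization q = 1)
    (hpK : p ∣ Nat.card K) :
    ∃ x : G, orderOf x = p * q :=
  stmt_4_general K hK p q hp hq hpq h1 h2 hsylp hsylq hpK
end

section
/- There are no positive integers m ≥ 1 and primes p ≥ 2 such that 3^(2m+1) - 3^(m+1) + 1 = 2^p - 1. -/
theorem stmt_11 (m p : ℕ) (hm : 1 ≤ m) (hp : p.Prime) :
    3 ^ (2 * m + 1) - 3 ^ (m + 1) + 1 ≠ 2 ^ p - 1 := by
  intro h
  have hy3 : 3 ≤ 3 ^ m := by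
    calc 3 = 3 ^ 1 := rfl
    _ ≤ 3 ^ m := Nat.pow_le_pow_right (by norm_num) hm
  obtain ⟨y', hy⟩ : ∃ y', 3 ^ m = y' + 3 := ⟨3 ^ m - 3, by omega⟩
  have h1 : (3:ℕ) ^ (m+1) = 3 * (y' + 3) := by rw [← hy]; ring
  have h2 : (3:ℕ) ^ (2*m+1) = 3 * (y'+3) * (y'+3) := by rw [← hy]; ring
  rw [h1, h2] at h
  have he : 2 ^ p + 3 * (y'+3) = 3 * (y'+3) * (y'+3) + 2 := by
    have hp1 : 1 ≤ 2 ^ p := Nat.one_le_two_pow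
    have hple : 3 * (y'+3) ≤ 3 * (y'+3) * (y'+3) := by nlinarith
    generalize hB : 3 * (y'+3) * (y'+3) = B at h hple ⊢
    generalize hP : 2 ^ p = P at h hp1 ⊢
    omega
  by_cases hp2 : p = 2
  · subst hp2
    norm_num at he
    nlinarith
  · have hodd : Odd p := hp.odd_of_ne_two hp2
    obtain ⟨s, hs⟩ := hodd
    have hs1 : 1 ≤ s := by have := hp.two_le; omega
    obtain ⟨x', hxd⟩ : ∃ x', 2 ^ s = x' + 2 := by
      have : 2 ≤ 2 ^ s := by calc 2 = 2^1 := rfl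
                                  _ ≤ 2 ^ s := Nat.pow_le_pow_right (by norm_num) hs1
      exact ⟨2 ^ s - 2, by omega⟩
    have hxp : 2 ^ p = 2 * (x'+2) * (x'+2) := by rw [hs, ← hxd]; ring
    rw [hxp] at he
    -- x' is even
    have hxe : 2 ∣ x' := by
      have : 2 ∣ 2 ^ s := dvd_pow_self 2 (by omega)
      omega
    have key : 2 * ((x'+1) * (x'+3)) = 3 * (y'+3) * (y'+2) := by nlinarith [he]
    have hdvd : 3 ^ (m+1) ∣ (x'+1) * (x'+3) := by
      have hd2 : 3 ^ (m+1) ∣ 2 * ((x'+1) * (x'+3)) := by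
        rw [key, h1]; exact Dvd.intro _ rfl
      have hcop : Nat.Coprime (3 ^ (m+1)) 2 := Nat.Coprime.pow_left _ (by norm_num)
      exact Nat.Coprime.dvd_of_dvd_mul_left hcop hd2
    -- coprimality of x'+1 and x'+3
    have hco : Nat.Coprime (x'+1) (x'+3) := by
      have : x' + 3 = 2 + (x'+1) := by ring
      rw [this, Nat.coprime_add_self_right]
      exact Nat.coprime_comm.mp (Nat.prime_two.coprime_iff_not_dvd.mpr (by omega))
    have h3 : (3:ℕ).Prime := by norm_num
    have hle : 3 ^ (m+1) ≤ x' + 3 := by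
      rcases (Nat.Prime.dvd_mul h3).mp (dvd_trans (dvd_pow_self 3 (Nat.succ_ne_zero m)) hdvd) with h31 | h33
      · -- 3 ∣ x'+1, so coprime 3^(m+1) (x'+3), hence 3^(m+1) ∣ x'+1
        have hc : Nat.Coprime (3 ^ (m+1)) (x'+3) := by
          apply Nat.Coprime.pow_left
          rcases Nat.coprime_or_dvd_of_prime h3 (x'+3) with h | h
          · exact h
          · exfalso; omega
        have := Nat.Coprime.dvd_of_dvd_mul_right hc hdvd
        calc 3 ^ (m+1) ≤ x' + 1 := Nat.le_of_dvd (by omega) this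
        _ ≤ x' + 3 := by omega
      · have hc : Nat.Coprime (3 ^ (m+1)) (x'+1) := by
          apply Nat.Coprime.pow_left
          rcases Nat.coprime_or_dvd_of_prime h3 (x'+1) with h | h
          · exact h
          · exfalso; omega
        have := Nat.Coprime.dvd_of_dvd_mul_left hc hdvd
        exact Nat.le_of_dvd (by omega) this
    rw [h1] at hle
    nlinarith [he, hle, Nat.mul_le_mul hle hle]
end
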